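/- arXiv:2502.10020 — 2 statements merged into one kernel-verified Lean document; each statement's English description precedes it below -/
import Mathlib

section
/- Let K ≥ 1 and f : ℝ^K → ℝ, f(z) = log(1 + Σ_{i=1}^K exp(z_i)). Then for all u, z₁, z₂ ∈ ℝ^K: uᵀ ( ∫₀¹ (1−s) ∇²f(z₁ + s(z₂ − z₁)) ds ) u ≥ (1 / (2 + 3√2 ‖z₂ − z₁‖_∞)) · uᵀ ∇²f(z₁) u. -/
open Matrix

/-- Softmax probabilities: `σᵢ(z) = exp(zᵢ)/(1 + Σₖ exp(zₖ))`. -/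
noncomputable def softmaxP (K : ℕ) (z : Fin K → ℝ) (i : Fin K) : ℝ :=
  Real.exp (z i) / (1 + ∑ k, Real.exp (z k))

/-- Hessian of `f(z) = log(1 + Σᵢ exp zᵢ)`:
`∇²f(z) = diag(σ(z)) - σ(z)σ(z)ᵀ`. -/
noncomputable def lseHess (K : ℕ) (z : Fin K → ℝ) : Matrix (Fin K) (Fin K) ℝ :=
  Matrix.diagonal (softmaxP K z) - Matrix.vecMulVec (softmaxP K z) (softmaxP K z)

/-! `∇²f(z)` is the covariance matrix of the one-hot encoding of a categorical variable `X` on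
`{0, 1, …, K}` with probabilities `(1 - ∑ σᵢ(z), σ₁(z), …, σ_K(z))`, so `uᵀ ∇²f(z) u` is the variance
of `u_X` (with `u₀ = 0`), that is `min_c E (u_X - c)²`. Moving `z` by `v` multiplies each of the `K + 1`
probabilities by at least `exp (-2‖v‖_∞)`, hence the quadratic form too. It remains to integrate:
`∫₀¹ (1 - s) exp (-a s) ds = (e⁻ᵃ + a - 1) / a² ≥ 1 / (2 + a)` because `(2 + a) e⁻ᵃ ≥ 2 - a`,
and `a = 2‖z₂ - z₁‖_∞ ≤ 3√2 ‖z₂ - z₁‖_∞`. -/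

open Real Finset

section categoricalCov

variable {ι : Type*} [Fintype ι] [DecidableEq ι]

def categoricalCov (p : ι → ℝ) : Matrix ι ι ℝ :=
  diagonal p - vecMulVec p p

lemma dotProduct_categoricalCov_mulVec (p u : ι → ℝ) :
    u ⬝ᵥ categoricalCov p *ᵥ u = ∑ i, p i * u i ^ 2 - (∑ i, p i * u i) ^ 2 := by
  rw [categoricalCov, sub_mulVec, dotProduct_sub, sq, sum_mul_sum]
  simp only [dotProduct, mulVec_diagonal]
  simp only [mulVec, dotProduct, vecMulVec_apply, mul_sum]
  congr 1
  · exact sum_congr rfl fun i _ => by ring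
  · exact sum_congr rfl fun i _ => sum_congr rfl fun j _ => by ring

lemma dotProduct_categoricalCov_mulVec_add_sq (p u : ι → ℝ) (c : ℝ) :
    u ⬝ᵥ categoricalCov p *ᵥ u + (c - ∑ i, p i * u i) ^ 2
      = (1 - ∑ i, p i) * c ^ 2 + ∑ i, p i * (u i - c) ^ 2 := by
  have h : ∑ i, p i * (u i - c) ^ 2
      = ∑ i, p i * u i ^ 2 - 2 * c * ∑ i, p i * u i + c ^ 2 * ∑ i, p i := by
    simp only [mul_sum, ← sum_sub_distrib, ← sum_add_distrib]
    exact sum_congr rfl fun i _ => by ring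
  rw [dotProduct_categoricalCov_mulVec, h]
  ring

lemma dotProduct_categoricalCov_mulVec_le (p u : ι → ℝ) (c : ℝ) :
    u ⬝ᵥ categoricalCov p *ᵥ u ≤ (1 - ∑ i, p i) * c ^ 2 + ∑ i, p i * (u i - c) ^ 2 := by
  rw [← dotProduct_categoricalCov_mulVec_add_sq p u c]
  exact le_add_of_nonneg_right (sq_nonneg _)

lemma dotProduct_categoricalCov_mulVec_eq (p u : ι → ℝ) :
    u ⬝ᵥ categoricalCov p *ᵥ u
      = (1 - ∑ i, p i) * (∑ i, p i * u i) ^ 2 + ∑ i, p i * (u i - ∑ j, p j * u j) ^ 2 := by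
  rw [← dotProduct_categoricalCov_mulVec_add_sq, sub_self, sq, mul_zero, add_zero]

lemma dotProduct_categoricalCov_mulVec_nonneg {p : ι → ℝ} (hp : ∀ i, 0 ≤ p i)
    (hp₁ : ∑ i, p i ≤ 1) (u : ι → ℝ) : 0 ≤ u ⬝ᵥ categoricalCov p *ᵥ u := by
  rw [dotProduct_categoricalCov_mulVec_eq]
  exact add_nonneg (mul_nonneg (sub_nonneg.2 hp₁) (sq_nonneg _))
    (sum_nonneg fun i _ => mul_nonneg (hp i) (sq_nonneg _))

lemma mul_dotProduct_categoricalCov_mulVec_le {p q : ι → ℝ} {t : ℝ} (ht : 0 ≤ t)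
    (hpq : ∀ i, t * p i ≤ q i) (hpq₀ : t * (1 - ∑ i, p i) ≤ 1 - ∑ i, q i) (u : ι → ℝ) :
    t * (u ⬝ᵥ categoricalCov p *ᵥ u) ≤ u ⬝ᵥ categoricalCov q *ᵥ u := by
  set c := ∑ i, q i * u i
  calc t * (u ⬝ᵥ categoricalCov p *ᵥ u)
      ≤ t * ((1 - ∑ i, p i) * c ^ 2 + ∑ i, p i * (u i - c) ^ 2) :=
        mul_le_mul_of_nonneg_left (dotProduct_categoricalCov_mulVec_le p u c) ht
    _ = t * (1 - ∑ i, p i) * c ^ 2 + ∑ i, t * p i * (u i - c) ^ 2 := by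
        simp only [mul_add, mul_sum, mul_assoc]
    _ ≤ (1 - ∑ i, q i) * c ^ 2 + ∑ i, q i * (u i - c) ^ 2 := by
        gcongr with i
        exact hpq i
    _ = u ⬝ᵥ categoricalCov q *ᵥ u := (dotProduct_categoricalCov_mulVec_eq q u).symm

end categoricalCov

section softmax

variable {K : ℕ}

lemma softmaxP_nonneg (z : Fin K → ℝ) (i : Fin K) : 0 ≤ softmaxP K z i := by
  unfold softmaxP; positivity

lemma one_sub_sum_softmaxP (z : Fin K → ℝ) :
    1 - ∑ i, softmaxP K z i = (1 + ∑ k, exp (z k))⁻¹ := by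
  have : 0 < 1 + ∑ k, exp (z k) := by positivity
  simp only [softmaxP, ← sum_div]
  field_simp
  ring

lemma sum_softmaxP_le_one (z : Fin K → ℝ) : ∑ i, softmaxP K z i ≤ 1 := by
  have := one_sub_sum_softmaxP z
  have : 0 < (1 + ∑ k, exp (z k))⁻¹ := by positivity
  linarith

lemma exp_neg_norm_mul_exp_le_exp_add (z v : Fin K → ℝ) (i : Fin K) :
    exp (-‖v‖) * exp (z i) ≤ exp ((z + v) i) := by
  rw [← exp_add, Pi.add_apply, exp_le_exp]
  linarith [neg_abs_le (v i), norm_le_pi_norm v i, Real.norm_eq_abs (v i)]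

lemma exp_add_le_exp_norm_mul_exp (z v : Fin K → ℝ) (i : Fin K) :
    exp ((z + v) i) ≤ exp ‖v‖ * exp (z i) := by
  rw [← exp_add, Pi.add_apply, exp_le_exp]
  linarith [le_abs_self (v i), norm_le_pi_norm v i, Real.norm_eq_abs (v i)]

lemma one_add_sum_exp_add_le (z v : Fin K → ℝ) :
    1 + ∑ k, exp ((z + v) k) ≤ exp ‖v‖ * (1 + ∑ k, exp (z k)) := by
  rw [mul_add, mul_one, mul_sum]
  gcongr with k
  · exact one_le_exp (norm_nonneg v)
  · exact exp_add_le_exp_norm_mul_exp z v k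

lemma exp_neg_two_norm_mul_div_le {w w' : ℝ} (z v : Fin K → ℝ) (hw : exp (-‖v‖) * w ≤ w')
    (hw₀ : 0 ≤ w) :
    exp (-(2 * ‖v‖)) * (w / (1 + ∑ k, exp (z k))) ≤ w' / (1 + ∑ k, exp ((z + v) k)) := by
  have h : exp (-(2 * ‖v‖)) = exp (-‖v‖) / exp ‖v‖ := by rw [← exp_sub]; ring_nf
  rw [h, div_mul_div_comm]
  exact div_le_div₀ ((mul_nonneg (exp_pos _).le hw₀).trans hw) hw (by positivity)
    (one_add_sum_exp_add_le z v)

lemma exp_neg_two_norm_mul_softmaxP_le (z v : Fin K → ℝ) (i : Fin K) :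
    exp (-(2 * ‖v‖)) * softmaxP K z i ≤ softmaxP K (z + v) i :=
  exp_neg_two_norm_mul_div_le z v (exp_neg_norm_mul_exp_le_exp_add z v i) (exp_pos _).le

lemma exp_neg_two_norm_mul_one_sub_sum_softmaxP_le (z v : Fin K → ℝ) :
    exp (-(2 * ‖v‖)) * (1 - ∑ i, softmaxP K z i) ≤ 1 - ∑ i, softmaxP K (z + v) i := by
  simp only [one_sub_sum_softmaxP, inv_eq_one_div]
  exact exp_neg_two_norm_mul_div_le z v (by simp) zero_le_one

lemma exp_neg_two_norm_mul_quadForm_lseHess_le (u z v : Fin K → ℝ) :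
    exp (-(2 * ‖v‖)) * (u ⬝ᵥ lseHess K z *ᵥ u) ≤ u ⬝ᵥ lseHess K (z + v) *ᵥ u :=
  mul_dotProduct_categoricalCov_mulVec_le (exp_pos _).le (exp_neg_two_norm_mul_softmaxP_le z v)
    (exp_neg_two_norm_mul_one_sub_sum_softmaxP_le z v) u

lemma quadForm_lseHess_nonneg (u z : Fin K → ℝ) : 0 ≤ u ⬝ᵥ lseHess K z *ᵥ u :=
  dotProduct_categoricalCov_mulVec_nonneg (softmaxP_nonneg z) (sum_softmaxP_le_one z) u

@[fun_prop]
lemma continuous_lseHess : Continuous (lseHess K) := by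
  unfold lseHess softmaxP
  fun_prop (disch := intro; positivity)

end softmax

lemma integral_sq_mul_one_sub_mul_exp_neg_mul (a : ℝ) :
    ∫ s in (0 : ℝ)..1, a ^ 2 * ((1 - s) * exp (-(a * s))) = exp (-a) + a - 1 := by
  have hderiv : ∀ s ∈ Set.uIcc (0 : ℝ) 1, HasDerivAt (fun t => exp (-(a * t)) * (a * t + 1 - a))
      (a ^ 2 * ((1 - s) * exp (-(a * s)))) s := by
    intro s _
    have h₁ : HasDerivAt (fun t => -(a * t)) (-a) s := by
      simpa using ((hasDerivAt_id s).const_mul a).fun_neg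
    have h₂ : HasDerivAt (fun t => a * t + 1 - a) a s := by
      simpa using (((hasDerivAt_id s).const_mul a).add_const 1).sub_const a
    exact (h₁.exp.fun_mul h₂).congr_deriv (by ring)
  rw [intervalIntegral.integral_eq_sub_of_hasDerivAt hderiv
    (Continuous.intervalIntegrable (by fun_prop) _ _)]
  simp only [mul_one, mul_zero, neg_zero, exp_zero, zero_add, one_mul]
  ring

lemma two_sub_le_two_add_mul_exp_neg {a : ℝ} (ha : 0 ≤ a) : 2 - a ≤ (2 + a) * exp (-a) := by
  rcases lt_or_ge a 2 with h2 | h2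
  · have h := exp_le_two_add_div_two_sub ha h2
    rwa [le_div_iff₀ (by linarith), ← le_div_iff₀' (exp_pos a), div_eq_mul_inv, ← exp_neg] at h
  · nlinarith [exp_pos (-a)]

lemma one_div_two_add_le_integral_one_sub_mul_exp_neg_mul {a : ℝ} (ha : 0 ≤ a) :
    1 / (2 + a) ≤ ∫ s in (0 : ℝ)..1, (1 - s) * exp (-(a * s)) := by
  rcases ha.eq_or_lt with rfl | ha
  · norm_num [intervalIntegral.integral_sub intervalIntegrable_const
      intervalIntegral.intervalIntegrable_id]
  set I := ∫ s in (0 : ℝ)..1, (1 - s) * exp (-(a * s))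
  have hI : a ^ 2 * I = exp (-a) + a - 1 := by
    rw [← intervalIntegral.integral_const_mul, integral_sq_mul_one_sub_mul_exp_neg_mul]
  rw [div_le_iff₀ (by positivity), ← mul_le_mul_iff_right₀ (by positivity : 0 < a ^ 2)]
  nlinarith [two_sub_le_two_add_mul_exp_neg ha.le]

theorem lse_hessian_integral_lower_bound_general (K : ℕ) (u z₁ z₂ : Fin K → ℝ) :
    (1 / (2 + 3 * Real.sqrt 2 * ‖z₂ - z₁‖)) * (u ⬝ᵥ (lseHess K z₁).mulVec u)
      ≤ ∫ s in (0:ℝ)..1, (1 - s) * (u ⬝ᵥ (lseHess K (z₁ + s • (z₂ - z₁))).mulVec u) := by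
  set δ := ‖z₂ - z₁‖
  have hpointwise : ∀ s ∈ Set.Icc (0 : ℝ) 1, (1 - s) * exp (-(2 * δ * s)) * (u ⬝ᵥ lseHess K z₁ *ᵥ u)
      ≤ (1 - s) * (u ⬝ᵥ lseHess K (z₁ + s • (z₂ - z₁)) *ᵥ u) := by
    rintro s ⟨hs₀, hs₁⟩
    have h := exp_neg_two_norm_mul_quadForm_lseHess_le u z₁ (s • (z₂ - z₁))
    rw [norm_smul, Real.norm_of_nonneg hs₀] at h
    rw [mul_assoc, show 2 * δ * s = 2 * (s * δ) by ring]
    exact mul_le_mul_of_nonneg_left h (by linarith)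
  have hintegral := intervalIntegral.integral_mono_on (μ := MeasureTheory.volume) zero_le_one
    (by apply Continuous.intervalIntegrable; fun_prop)
    (by apply Continuous.intervalIntegrable; fun_prop) hpointwise
  rw [intervalIntegral.integral_mul_const] at hintegral
  have hδ : 2 * δ ≤ 3 * √2 * δ := by
    gcongr; nlinarith [one_le_sqrt.2 one_le_two]
  have hQ₁ := quadForm_lseHess_nonneg u z₁
  calc 1 / (2 + 3 * √2 * δ) * (u ⬝ᵥ lseHess K z₁ *ᵥ u)
      ≤ 1 / (2 + 2 * δ) * (u ⬝ᵥ lseHess K z₁ *ᵥ u) := by gcongr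
    _ ≤ (∫ s in (0 : ℝ)..1, (1 - s) * exp (-(2 * δ * s))) * (u ⬝ᵥ lseHess K z₁ *ᵥ u) := by
        gcongr
        exact one_div_two_add_le_integral_one_sub_mul_exp_neg_mul (by positivity)
    _ ≤ _ := hintegral

/-- **Proposition B.5.** For all `u, z₁, z₂ ∈ ℝ^K`:
`uᵀ (∫₀¹ (1−s) ∇²f(z₁ + s(z₂ − z₁)) ds) u ≥ (1/(2 + 3√2 ‖z₂ − z₁‖_∞)) uᵀ ∇²f(z₁) u`,
where the norm on `Fin K → ℝ` is the sup-norm. -/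
theorem lse_hessian_integral_lower_bound (K : ℕ) (hK : 1 ≤ K) (u z₁ z₂ : Fin K → ℝ) :
    (1 / (2 + 3 * Real.sqrt 2 * ‖z₂ - z₁‖)) * (u ⬝ᵥ (lseHess K z₁).mulVec u)
      ≤ ∫ s in (0:ℝ)..1, (1 - s) * (u ⬝ᵥ (lseHess K (z₁ + s • (z₂ - z₁))).mulVec u) :=
  lse_hessian_integral_lower_bound_general K u z₁ z₂
end

section
/- Let S be a finite assortment with feature vectors x_i ∈ ℝ^d (i ∈ S), y a one-hot response vector over S ∪ {0}, and ℓ(w) = −Σ_{i∈S∪{0}} y_i log p(i|S,w) the MNL loss. Let α > 0 and let w, w' ∈ ℝ^d satisfy max_{i∈S} |x_iᵀ(w − w')| ≤ α. Then ℓ(w) ≥ ℓ(w') + ∇ℓ(w')ᵀ(w − w') + (1/(2 + 3√2 α)) · (w − w')ᵀ ∇²ℓ(w') (w − w'). -/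
open Matrix

noncomputable section

/-- MNL choice probability of item `i ∈ S`. -/
def mnlProb {d : ℕ} {ι : Type*} (S : Finset ι) (x : ι → Fin d → ℝ)
    (w : Fin d → ℝ) (i : ι) : ℝ :=
  Real.exp (x i ⬝ᵥ w) / (1 + ∑ j ∈ S, Real.exp (x j ⬝ᵥ w))

/-- MNL probability of the outside option. -/
def mnlProb0 {d : ℕ} {ι : Type*} (S : Finset ι) (x : ι → Fin d → ℝ)
    (w : Fin d → ℝ) : ℝ :=
  1 / (1 + ∑ j ∈ S, Real.exp (x j ⬝ᵥ w))

/-- MNL loss for a response `y` over `S ∪ {0}` (with `y0` the response for the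
outside option): `ℓ(w) = −Σ_{i∈S∪{0}} yᵢ log p(i|S,w)`. -/
def mnlLoss {d : ℕ} {ι : Type*} (S : Finset ι) (x : ι → Fin d → ℝ)
    (y : ι → ℝ) (y0 : ℝ) (w : Fin d → ℝ) : ℝ :=
  -(y0 * Real.log (mnlProb0 S x w) + ∑ i ∈ S, y i * Real.log (mnlProb S x w i))

/-- Gradient of the MNL loss: `∇ℓ(w) = Σ_{i∈S} (p(i|S,w) − yᵢ) xᵢ`. -/
def mnlGrad {d : ℕ} {ι : Type*} (S : Finset ι) (x : ι → Fin d → ℝ)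
    (y : ι → ℝ) (w : Fin d → ℝ) : Fin d → ℝ :=
  ∑ i ∈ S, (mnlProb S x w i - y i) • x i

/-- Hessian of the MNL loss. -/
def mnlHess {d : ℕ} {ι : Type*} (S : Finset ι) (x : ι → Fin d → ℝ)
    (w : Fin d → ℝ) : Matrix (Fin d) (Fin d) ℝ :=
  (∑ i ∈ S, mnlProb S x w i • vecMulVec (x i) (x i))
    - vecMulVec (∑ i ∈ S, mnlProb S x w i • x i) (∑ i ∈ S, mnlProb S x w i • x i)

end


/-!
Along the segment `w' + t • (w - w')` the MNL loss is `log Z t` minus a linear function of `t`,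
where `Z t = ∑_{o ∈ S ∪ {0}} exp (b o + t * a o)` with `a o = x oᵀ (w - w')`, `b o = x oᵀ w'` and
`a 0 = b 0 = 0` for the outside option. The first three derivatives of `log Z` are the mean `M`,
variance `V` and third central moment of `a` under the softmax distribution. Since `|a o| ≤ α`,
every `a o - M ≥ -2α`, so the third central moment is at least `-2α V`. Hence `V t ≥ e^{-2αt} V 0`,
and integrating twice gives `log Z 1 ≥ log Z 0 + M 0 + V 0 (e^{-c} + c - 1) / c²` with `c = 2α`;
finally `(e^{-c} + c - 1) / c² ≥ 1 / (2 + c) ≥ 1 / (2 + 3√2 α)`.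
-/

open Real Finset Set

theorem le_of_hasDerivAt_le_of_le {f g f' g' : ℝ → ℝ} {a t : ℝ}
    (hf : ∀ s, HasDerivAt f (f' s) s) (hg : ∀ s, HasDerivAt g (g' s) s)
    (ha : f a ≤ g a) (hderiv : ∀ s, a < s → f' s ≤ g' s) (ht : a ≤ t) : f t ≤ g t := by
  have hmono : MonotoneOn (fun s => g s - f s) (Ici a) := by
    refine monotoneOn_of_hasDerivWithinAt_nonneg (convex_Ici a)
      (fun s _ => ((hg s).sub (hf s)).continuousAt.continuousWithinAt)
      (fun s _ => ((hg s).sub (hf s)).hasDerivWithinAt) fun s hs => ?_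
    rw [interior_Ici] at hs
    exact sub_nonneg.mpr (hderiv s hs)
  have := hmono self_mem_Ici ht ht
  simp only at this
  linarith

theorem exp_neg_mul_mul_le_of_deriv_ge {v v' : ℝ → ℝ} {c t : ℝ}
    (hv : ∀ s, HasDerivAt v (v' s) s) (hv' : ∀ s, -(c * v s) ≤ v' s) (ht : 0 ≤ t) :
    exp (-(c * t)) * v 0 ≤ v t := by
  have hexp : ∀ s, HasDerivAt (fun s => exp (c * s)) (exp (c * s) * c) s := fun s =>
    ((hasDerivAt_id s).const_mul c).exp.congr_deriv (by simp)
  have hgrowth : v 0 ≤ exp (c * t) * v t :=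
    le_of_hasDerivAt_le_of_le (g := fun s => exp (c * s) * v s)
      (g' := fun s => exp (c * s) * (c * v s + v' s))
      (fun _ => hasDerivAt_const _ _) (fun s => ((hexp s).mul (hv s)).congr_deriv (by ring))
      (by simp) (fun s _ => mul_nonneg (exp_pos _).le (by linarith [hv' s])) ht
  calc exp (-(c * t)) * v 0 ≤ exp (-(c * t)) * (exp (c * t) * v t) := by gcongr
    _ = v t := by rw [← mul_assoc, ← exp_add]; simp

/- The two comparison functions integrate `e^{-cs} f₂ 0 ≤ f₂ s` once and twice. -/
theorem le_of_third_deriv_ge_neg_mul {f f₁ f₂ f₃ : ℝ → ℝ} {c t : ℝ} (hc : 0 < c)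
    (hf : ∀ s, HasDerivAt f (f₁ s) s) (hf₁ : ∀ s, HasDerivAt f₁ (f₂ s) s)
    (hf₂ : ∀ s, HasDerivAt f₂ (f₃ s) s) (hf₃ : ∀ s, -(c * f₂ s) ≤ f₃ s) (ht : 0 ≤ t) :
    f 0 + t * f₁ 0 + f₂ 0 * ((exp (-(c * t)) + c * t - 1) / c ^ 2) ≤ f t := by
  have hexp : ∀ s, HasDerivAt (fun s => exp (-(c * s))) (-c * exp (-(c * s))) s := fun s =>
    ((hasDerivAt_id s).const_mul c).neg.exp.congr_deriv (by simp; ring)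
  have hslope : ∀ s, 0 ≤ s → f₁ 0 + f₂ 0 * ((1 - exp (-(c * s))) / c) ≤ f₁ s := fun s hs =>
    le_of_hasDerivAt_le_of_le (f := fun s => f₁ 0 + f₂ 0 * ((1 - exp (-(c * s))) / c))
      (f' := fun s => exp (-(c * s)) * f₂ 0)
      (fun s => (((hexp s).const_sub 1).div_const c).const_mul (f₂ 0) |>.const_add (f₁ 0)
        |>.congr_deriv (by field_simp))
      hf₁ (by simp) (fun s hs => exp_neg_mul_mul_le_of_deriv_ge hf₂ hf₃ hs.le) hs
  exact le_of_hasDerivAt_le_of_le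
    (f := fun s => f 0 + s * f₁ 0 + f₂ 0 * ((exp (-(c * s)) + c * s - 1) / c ^ 2))
    (f' := fun s => f₁ 0 + f₂ 0 * ((1 - exp (-(c * s))) / c))
    (fun s => (((hasDerivAt_id s).mul_const (f₁ 0)).const_add (f 0)).add
      ((((hexp s).add ((hasDerivAt_id s).const_mul c)).sub_const 1).div_const (c ^ 2)
        |>.const_mul (f₂ 0)) |>.congr_deriv (by field_simp; ring))
    hf (by simp) (fun s hs => hslope s hs.le) ht

theorem one_div_two_add_le_exp_neg_add_sub_one_div_sq {c : ℝ} (hc : 0 < c) :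
    1 / (2 + c) ≤ (exp (-c) + c - 1) / c ^ 2 := by
  have hderiv : ∀ s, 0 ≤ 1 - (1 + s) * exp (-s) := fun s => by
    have := mul_le_mul_of_nonneg_right (add_one_le_exp s) (exp_pos (-s)).le
    rw [← exp_add, add_neg_cancel, exp_zero] at this
    linarith
  have key : 0 ≤ (2 + c) * exp (-c) - (2 - c) :=
    le_of_hasDerivAt_le_of_le (f := fun _ => 0) (f' := fun _ => 0)
      (g := fun s => (2 + s) * exp (-s) - (2 - s)) (g' := fun s => 1 - (1 + s) * exp (-s))
      (fun _ => hasDerivAt_const _ _)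
      (fun s => (((hasDerivAt_id s).const_add 2).mul (hasDerivAt_id s).neg.exp).sub
        ((hasDerivAt_id s).const_sub 2) |>.congr_deriv (by simp; ring))
      (by simp) (fun s _ => hderiv s) hc.le
  rw [div_le_div_iff₀ (by positivity) (by positivity)]
  nlinarith

noncomputable section

namespace LogSumExp

variable {κ : Type*} (T : Finset κ) (a b : κ → ℝ)

/- The softmax distribution `weight` on `T` along the line of scores `b + t • a`, and the moments
of `a` under it. -/
def partition (t : ℝ) : ℝ := ∑ i ∈ T, exp (b i + t * a i)

def weight (t : ℝ) (i : κ) : ℝ := exp (b i + t * a i) / partition T a b t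

def mean (t : ℝ) : ℝ := ∑ i ∈ T, weight T a b t i * a i

def centralMoment (k : ℕ) (t : ℝ) : ℝ := ∑ i ∈ T, weight T a b t i * (a i - mean T a b t) ^ k

variable {T a b}

theorem partition_pos (hT : T.Nonempty) (t : ℝ) : 0 < partition T a b t :=
  sum_pos (fun _ _ => exp_pos _) hT

theorem weight_nonneg (t : ℝ) (i : κ) : 0 ≤ weight T a b t i :=
  div_nonneg (exp_pos _).le (sum_nonneg fun _ _ => (exp_pos _).le)

theorem sum_weight (hT : T.Nonempty) (t : ℝ) : ∑ i ∈ T, weight T a b t i = 1 := by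
  simp only [weight]
  rw [← sum_div, ← partition, div_self (partition_pos hT t).ne']

theorem sum_weight_mul_sub_mean (hT : T.Nonempty) (t : ℝ) :
    ∑ i ∈ T, weight T a b t i * (a i - mean T a b t) = 0 := by
  simp only [mul_sub, sum_sub_distrib, ← sum_mul, sum_weight hT, one_mul, mean, sub_self]

theorem centralMoment_two_eq (hT : T.Nonempty) (t : ℝ) :
    centralMoment T a b 2 t = ∑ i ∈ T, weight T a b t i * a i ^ 2 - mean T a b t ^ 2 := by
  set M := mean T a b t
  calc centralMoment T a b 2 t
      = ∑ i ∈ T, weight T a b t i * a i ^ 2 - M * ∑ i ∈ T, weight T a b t i * a i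
        - M * ∑ i ∈ T, weight T a b t i * (a i - M) := by
        rw [centralMoment, mul_sum, mul_sum, ← sum_sub_distrib, ← sum_sub_distrib]
        exact sum_congr rfl fun i _ => by ring
    _ = ∑ i ∈ T, weight T a b t i * a i ^ 2 - M ^ 2 := by
        rw [sum_weight_mul_sub_mean hT, ← mean]; ring

theorem centralMoment_two_nonneg (t : ℝ) : 0 ≤ centralMoment T a b 2 t :=
  sum_nonneg fun i _ => mul_nonneg (weight_nonneg t i) (sq_nonneg _)

theorem mean_le (hT : T.Nonempty) {m : ℝ} (ha : ∀ j ∈ T, a j ≤ m) (t : ℝ) : mean T a b t ≤ m :=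
  calc mean T a b t ≤ ∑ j ∈ T, weight T a b t j * m :=
        sum_le_sum fun j hj => mul_le_mul_of_nonneg_left (ha j hj) (weight_nonneg t j)
    _ = m := by rw [← sum_mul, sum_weight hT, one_mul]

theorem neg_mul_centralMoment_two_le_three (hT : T.Nonempty) {δ : ℝ}
    (ha : ∀ i ∈ T, ∀ j ∈ T, a j ≤ a i + δ) (t : ℝ) :
    -(δ * centralMoment T a b 2 t) ≤ centralMoment T a b 3 t := by
  rw [centralMoment, centralMoment, ← sub_nonneg, sub_neg_eq_add, mul_sum, ← sum_add_distrib]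
  refine sum_nonneg fun i hi => ?_
  have hi : 0 ≤ a i - mean T a b t + δ := by linarith [mean_le (b := b) hT (ha i hi) t]
  have hterm := mul_nonneg (weight_nonneg (T := T) (a := a) (b := b) t i)
    (mul_nonneg (sq_nonneg (a i - mean T a b t)) hi)
  linarith

theorem hasDerivAt_partition (hT : T.Nonempty) (t : ℝ) :
    HasDerivAt (partition T a b) (mean T a b t * partition T a b t) t := by
  have hsum : HasDerivAt (partition T a b) (∑ i ∈ T, exp (b i + t * a i) * a i) t :=
    HasDerivAt.fun_sum fun i _ => (((hasDerivAt_id t).mul_const (a i)).const_add (b i)).exp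
      |>.congr_deriv (by simp)
  convert hsum using 1
  rw [mean, sum_mul]
  refine sum_congr rfl fun i _ => ?_
  rw [weight]
  field_simp [(partition_pos (a := a) (b := b) hT t).ne']

theorem hasDerivAt_log_partition (hT : T.Nonempty) (t : ℝ) :
    HasDerivAt (fun s => log (partition T a b s)) (mean T a b t) t :=
  (hasDerivAt_partition hT t).log (partition_pos hT t).ne' |>.congr_deriv
    (mul_div_cancel_right₀ _ (partition_pos hT t).ne')

theorem hasDerivAt_weight (hT : T.Nonempty) (t : ℝ) (i : κ) :
    HasDerivAt (fun s => weight T a b s i) ((a i - mean T a b t) * weight T a b t i) t := by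
  have hZ := (partition_pos (a := a) (b := b) hT t).ne'
  refine (((hasDerivAt_id t).mul_const (a i)).const_add (b i)).exp.div
    (hasDerivAt_partition hT t) hZ |>.congr_deriv ?_
  simp only [weight, id]
  field_simp

theorem hasDerivAt_sum_weight_mul (hT : T.Nonempty) {t : ℝ} {g g' : κ → ℝ → ℝ}
    (hg : ∀ i ∈ T, HasDerivAt (g i) (g' i t) t) :
    HasDerivAt (fun s => ∑ i ∈ T, weight T a b s i * g i s)
      (∑ i ∈ T, weight T a b t i * (g' i t + (a i - mean T a b t) * g i t)) t :=
  HasDerivAt.fun_sum fun i hi => ((hasDerivAt_weight hT t i).mul (hg i hi)).congr_deriv (by ring)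

theorem hasDerivAt_mean (hT : T.Nonempty) (t : ℝ) :
    HasDerivAt (mean T a b) (centralMoment T a b 2 t) t := by
  refine (hasDerivAt_sum_weight_mul (a := a) (b := b) hT (g := fun i _ => a i)
    (g' := fun _ _ => 0) (fun i _ => hasDerivAt_const _ _)).congr_deriv ?_
  rw [← sub_eq_zero, centralMoment, ← sum_sub_distrib]
  calc _ = mean T a b t * ∑ i ∈ T, weight T a b t i * (a i - mean T a b t) := by
        rw [mul_sum]; exact sum_congr rfl fun i _ => by ring
    _ = 0 := by rw [sum_weight_mul_sub_mean hT, mul_zero]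

theorem hasDerivAt_centralMoment_two (hT : T.Nonempty) (t : ℝ) :
    HasDerivAt (centralMoment T a b 2) (centralMoment T a b 3 t) t := by
  refine (hasDerivAt_sum_weight_mul (a := a) (b := b) hT
    (g := fun i s => (a i - mean T a b s) ^ 2)
    (g' := fun i s => -(2 * centralMoment T a b 2 s * (a i - mean T a b s)))
    (fun i _ => ((hasDerivAt_mean hT t).const_sub (a i)).pow 2 |>.congr_deriv (by ring)))
    |>.congr_deriv ?_
  set V := centralMoment T a b 2 t
  rw [← sub_eq_zero, centralMoment, ← sum_sub_distrib]
  calc _ = -(2 * V) * ∑ i ∈ T, weight T a b t i * (a i - mean T a b t) := by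
        rw [mul_sum]; exact sum_congr rfl fun i _ => by ring
    _ = 0 := by rw [sum_weight_mul_sub_mean hT, mul_zero]

theorem log_partition_one_ge (hT : T.Nonempty) {δ : ℝ} (hδ : 0 < δ)
    (ha : ∀ i ∈ T, ∀ j ∈ T, a j ≤ a i + δ) :
    log (partition T a b 0) + mean T a b 0 + 1 / (2 + δ) * centralMoment T a b 2 0
      ≤ log (partition T a b 1) := by
  have htaylor := le_of_third_deriv_ge_neg_mul hδ (hasDerivAt_log_partition (b := b) hT)
    (hasDerivAt_mean hT) (hasDerivAt_centralMoment_two hT)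
    (neg_mul_centralMoment_two_le_three hT ha) zero_le_one
  have hweight := mul_le_mul_of_nonneg_left (one_div_two_add_le_exp_neg_add_sub_one_div_sq hδ)
    (centralMoment_two_nonneg (T := T) (a := a) (b := b) 0)
  simp only [mul_one, one_mul] at htaylor
  linarith

end LogSumExp

end

section MNL

variable {d : ℕ} {ι : Type*} (S : Finset ι) (x : ι → Fin d → ℝ)

/- `none` is the outside option, whose utility is normalised to `0`. -/
def mnlScore (v : Fin d → ℝ) (o : Option ι) : ℝ := o.elim 0 fun i => x i ⬝ᵥ v

open LogSumExp

theorem partition_mnlScore (u v : Fin d → ℝ) (t : ℝ) :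
    partition S.insertNone (mnlScore x v) (mnlScore x u) t
      = 1 + ∑ j ∈ S, exp (x j ⬝ᵥ (u + t • v)) := by
  simp [partition, mnlScore, dotProduct_add, dotProduct_smul]

theorem weight_mnlScore_some (u v : Fin d → ℝ) (i : ι) :
    weight S.insertNone (mnlScore x v) (mnlScore x u) 0 (some i) = mnlProb S x u i := by
  simp [weight, partition_mnlScore, mnlProb, mnlScore]

theorem mean_mnlScore (u v : Fin d → ℝ) :
    mean S.insertNone (mnlScore x v) (mnlScore x u) 0 = ∑ i ∈ S, mnlProb S x u i * (x i ⬝ᵥ v) := by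
  simp [mean, weight_mnlScore_some, mnlScore]

theorem centralMoment_two_mnlScore (u v : Fin d → ℝ) :
    centralMoment S.insertNone (mnlScore x v) (mnlScore x u) 2 0
      = ∑ i ∈ S, mnlProb S x u i * (x i ⬝ᵥ v) ^ 2
        - (∑ i ∈ S, mnlProb S x u i * (x i ⬝ᵥ v)) ^ 2 := by
  simp [centralMoment_two_eq insertNone_nonempty, mean_mnlScore, weight_mnlScore_some, mnlScore]

theorem mnlLoss_eq {y : ι → ℝ} {y0 : ℝ} (hy : y0 + ∑ i ∈ S, y i = 1) (w : Fin d → ℝ) :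
    mnlLoss S x y y0 w = log (1 + ∑ j ∈ S, exp (x j ⬝ᵥ w)) - ∑ i ∈ S, y i * (x i ⬝ᵥ w) := by
  have hZ : (1 + ∑ j ∈ S, exp (x j ⬝ᵥ w)) ≠ 0 := by positivity
  simp only [mnlLoss, mnlProb0, mnlProb, one_div, log_inv, log_div (exp_ne_zero _) hZ, log_exp,
    mul_sub, sum_sub_distrib, ← sum_mul]
  linear_combination log (1 + ∑ j ∈ S, exp (x j ⬝ᵥ w)) * hy

theorem mnlGrad_dotProduct (y : ι → ℝ) (w v : Fin d → ℝ) :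
    mnlGrad S x y w ⬝ᵥ v = ∑ i ∈ S, mnlProb S x w i * (x i ⬝ᵥ v) - ∑ i ∈ S, y i * (x i ⬝ᵥ v) := by
  simp [mnlGrad, sum_dotProduct, sub_mul]

theorem dotProduct_mnlHess_mulVec (w v : Fin d → ℝ) :
    v ⬝ᵥ mnlHess S x w *ᵥ v
      = ∑ i ∈ S, mnlProb S x w i * (x i ⬝ᵥ v) ^ 2
        - (∑ i ∈ S, mnlProb S x w i * (x i ⬝ᵥ v)) ^ 2 := by
  have hquad : ∀ u : Fin d → ℝ, v ⬝ᵥ vecMulVec u u *ᵥ v = (u ⬝ᵥ v) ^ 2 := fun u => by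
    rw [vecMulVec_mulVec, dotProduct_comm]
    simp [sq]
  simp [mnlHess, sub_mulVec, sum_mulVec, dotProduct_sum, sum_dotProduct, smul_mulVec, hquad]

end MNL

/-- **Lemma C.3.** If `y` is a one-hot response over `S ∪ {0}`,
`α > 0`, and `max_{i∈S} |xᵢᵀ(w − w')| ≤ α`, then
`ℓ(w) ≥ ℓ(w') + ∇ℓ(w')ᵀ(w − w') + (1/(2 + 3√2 α)) (w − w')ᵀ ∇²ℓ(w') (w − w')`. -/
theorem mnl_loss_second_order_lower_bound {d : ℕ} {ι : Type*} (S : Finset ι)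
    (x : ι → Fin d → ℝ) (y : ι → ℝ) (y0 : ℝ)
    (hy : (y0 = 1 ∧ ∀ i ∈ S, y i = 0) ∨
      (y0 = 0 ∧ ∃ i₀ ∈ S, y i₀ = 1 ∧ ∀ j ∈ S, j ≠ i₀ → y j = 0))
    (α : ℝ) (hα : 0 < α) (w w' : Fin d → ℝ)
    (halign : ∀ i ∈ S, |x i ⬝ᵥ (w - w')| ≤ α) :
    mnlLoss S x y y0 w' + mnlGrad S x y w' ⬝ᵥ (w - w')
      + (1 / (2 + 3 * Real.sqrt 2 * α)) *
        ((w - w') ⬝ᵥ (mnlHess S x w').mulVec (w - w'))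
    ≤ mnlLoss S x y y0 w := by
  have hsum : y0 + ∑ i ∈ S, y i = 1 := by
    rcases hy with ⟨rfl, hzero⟩ | ⟨rfl, i₀, hi₀, hone, hzero⟩
    · simp [sum_eq_zero hzero]
    · simp [sum_eq_single_of_mem i₀ hi₀ hzero, hone]
  have hscore : ∀ o ∈ S.insertNone, |mnlScore x (w - w') o| ≤ α := by
    rw [forall_mem_insertNone]
    exact ⟨by simpa [mnlScore] using hα.le, halign⟩
  have hosc : ∀ o ∈ S.insertNone, ∀ o' ∈ S.insertNone,
      mnlScore x (w - w') o' ≤ mnlScore x (w - w') o + 2 * α := fun o ho o' ho' => by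
    linarith [abs_le.mp (hscore o ho), abs_le.mp (hscore o' ho')]
  have hbound := LogSumExp.log_partition_one_ge (b := mnlScore x w') insertNone_nonempty
    (by positivity) hosc
  have hvar := LogSumExp.centralMoment_two_nonneg (T := S.insertNone) (a := mnlScore x (w - w'))
    (b := mnlScore x w') 0
  have hconst : 1 / (2 + 3 * √2 * α) ≤ 1 / (2 + 2 * α) := by
    gcongr
    nlinarith [one_le_sqrt.mpr one_le_two]
  rw [partition_mnlScore, partition_mnlScore, mean_mnlScore, centralMoment_two_mnlScore] at hbound
  rw [centralMoment_two_mnlScore] at hvar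
  rw [mnlLoss_eq S x hsum, mnlLoss_eq S x hsum, mnlGrad_dotProduct, dotProduct_mnlHess_mulVec]
  simp only [zero_smul, add_zero, one_smul, add_sub_cancel] at hbound
  have hlin : ∑ i ∈ S, y i * (x i ⬝ᵥ w)
      = ∑ i ∈ S, y i * (x i ⬝ᵥ w') + ∑ i ∈ S, y i * (x i ⬝ᵥ (w - w')) := by
    rw [← sum_add_distrib]; exact sum_congr rfl fun i _ => by rw [dotProduct_sub]; ring
  linarith [mul_le_mul_of_nonneg_right hconst hvar]
end
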